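/- For n ≥ 2, T_n ≥ binomial(2n-1,n)/n, and T_n ≤ binomial(2n-1,n)/n + binomial(2·⌊n/2⌋ − 1, ⌊n/2⌋)·n/n, so T_n / (4^n/(2√(πn)·n)) → 1 as n → ∞. -/

import Mathlib

open Finset Filter Topology

noncomputable section

/-- number of size-`k` submultisets of `{0,…,n-1}` whose sum is ≡ 0 mod `n` -/
def symCount (n k : ℕ) : ℕ :=
  Nat.card {s : Sym (Fin n) k // ((s : Multiset (Fin n)).map Fin.val).sum % n = 0}

/-- `T n`: number of size-`n` submultisets of `{0,…,n-1}` summing to `0` mod `n`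
(= number of rooted unlabelled cyclically distinct plane trees with `n` edges). -/
def planeTreeT (n : ℕ) : ℕ := symCount n n

/-- Walkup's formula expression `(1/n) ∑_{d ∣ n} C(2d-1, d) φ(n/d)` (exact division). -/
def walkupT (n : ℕ) : ℕ :=
  (∑ d ∈ n.divisors, Nat.choose (2 * d - 1) d * Nat.totient (n / d)) / n

/-- number of up-steps strictly before position `i` in a monotone lattice path
encoded by `f : Fin m → Bool` (`true` = up-step, `false` = right-step). -/
def upsBefore {m : ℕ} (f : Fin m → Bool) (i : Fin m) : ℕ :=
  Nat.card {j : Fin m // j < i ∧ f j = true}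

/-- area below/right of a monotone lattice path: sum over right-steps of the
number of up-steps before them. -/
def pathArea {m : ℕ} (f : Fin m → Bool) : ℕ :=
  ∑ i : Fin m, if f i = false then upsBefore f i else 0

/-- number of up-steps of a monotone lattice path. -/
def upCount {m : ℕ} (f : Fin m → Bool) : ℕ := Nat.card {i : Fin m // f i = true}

/-- the `m`-th increment (`±1`) of a walk of length `2n` encoded by
`ε : Fin (2n) → Bool` (`true` = `+1`); `0` out of range. -/
def stepVal (n : ℕ) (ε : Fin (2 * n) → Bool) (m : ℕ) : ℤ :=
  if h : m < 2 * n then (if ε ⟨m, h⟩ then 1 else -1) else 0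

/-- position of the walk after `k` steps. -/
def wpos (n : ℕ) (ε : Fin (2 * n) → Bool) (k : ℕ) : ℤ :=
  ∑ i ∈ Finset.range k, stepVal n ε i

/-- a walk of length `2n` is a bridge if it returns to `0`. -/
def IsBridge (n : ℕ) (ε : Fin (2 * n) → Bool) : Prop := wpos n ε (2 * n) = 0

/-- partial diamond area `σ_{2k} = (1/2) ∑_{i=1}^k B_{2i}` (the division is exact). -/
def psig (n : ℕ) (ε : Fin (2 * n) → Bool) (k : ℕ) : ℤ :=
  (∑ i ∈ Finset.range k, wpos n ε (2 * (i + 1))) / 2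

/-- diamond area `σ(B) = (1/2) ∑_{i=1}^n B_{2i}`. -/
def dsigma (n : ℕ) (ε : Fin (2 * n) → Bool) : ℤ := psig n ε n

/-- a bridge is graphical if `σ(B) = 0` and `σ_{2k} ≥ 0` for all `1 ≤ k < n`. -/
def IsGraphical (n : ℕ) (ε : Fin (2 * n) → Bool) : Prop :=
  IsBridge n ε ∧ dsigma n ε = 0 ∧ ∀ k, 1 ≤ k → k < n → 0 ≤ psig n ε k

/-- `B_n`: the number of graphical bridges of length `2n`. -/
def graphicalCount (n : ℕ) : ℕ := Nat.card {ε : Fin (2 * n) → Bool // IsGraphical n ε}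

/-! In Walkup's sum the divisor `d = n` contributes `C(2n-1, n)`; every other divisor has
`d ≤ n/2`, and `d ↦ C(2d-1, d) = C(2d, d)/2` is monotone, so since `∑_{d ∣ n} φ(n/d) = n` the
remaining terms add up to between `n - 1` and `C(2⌊n/2⌋-1, ⌊n/2⌋) (n - 1)`. For the asymptotics,
Stirling's formula gives `C(2n, n) ~ 4ⁿ/√(πn)`, while the correction term
`C(2⌊n/2⌋-1, ⌊n/2⌋) ≤ 2ⁿ` is negligible against `4ⁿ/n²`. -/

open Nat Real

theorem two_mul_choose_two_mul_sub_one {d : ℕ} (hd : d ≠ 0) :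
    2 * (2 * d - 1).choose d = centralBinom d := by
  obtain ⟨m, rfl⟩ := exists_eq_add_one_of_ne_zero hd
  rw [centralBinom_eq_two_mul_choose, show 2 * (m + 1) = 2 * m + 1 + 1 by ring,
    Nat.add_sub_cancel, choose_succ_succ' (2 * m + 1) m, choose_symm_half, two_mul]

theorem choose_two_mul_sub_one_monotone : Monotone fun d ↦ (2 * d - 1).choose d := by
  refine monotone_nat_of_le_succ fun d ↦ ?_
  rcases eq_or_ne d 0 with rfl | hd
  · simp
  have := centralBinom_strictMono.monotone (le_add_right d 1)
  rw [← two_mul_choose_two_mul_sub_one hd, ← two_mul_choose_two_mul_sub_one (add_one_ne_zero d)]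
    at this
  omega

theorem one_le_choose_two_mul_sub_one (d : ℕ) : 1 ≤ (2 * d - 1).choose d := by
  simpa using choose_two_mul_sub_one_monotone (zero_le d)

theorem sum_properDivisors_totient_div (n : ℕ) :
    ∑ d ∈ n.properDivisors, φ (n / d) = n - 1 := by
  rcases eq_or_ne n 0 with rfl | hn
  · simp
  have := sum_div_divisors n φ
  rw [← cons_self_properDivisors hn, sum_cons, Nat.div_self (pos_of_ne_zero hn), totient_one,
    cons_self_properDivisors hn, sum_totient] at this
  omega

theorem le_div_two_of_mem_properDivisors {d n : ℕ} (h : d ∈ n.properDivisors) :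
    d ≤ n / 2 := by
  obtain ⟨hdvd, -⟩ := mem_properDivisors.mp h
  have := one_lt_div_of_mem_properDivisors h
  rw [Nat.le_div_iff_mul_le two_pos]
  calc d * 2 ≤ d * (n / d) := Nat.mul_le_mul_left d this
    _ = n := Nat.mul_div_cancel' hdvd

def walkupSum (n : ℕ) : ℕ := ∑ d ∈ n.divisors, (2 * d - 1).choose d * φ (n / d)

theorem walkupT_eq_walkupSum_div (n : ℕ) : walkupT n = walkupSum n / n := rfl

theorem walkupSum_eq_add_sum_properDivisors {n : ℕ} (hn : n ≠ 0) :
    walkupSum n =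
      (2 * n - 1).choose n + ∑ d ∈ n.properDivisors, (2 * d - 1).choose d * φ (n / d) := by
  rw [walkupSum, ← cons_self_properDivisors hn, sum_cons, Nat.div_self (pos_of_ne_zero hn),
    totient_one, mul_one]

theorem choose_add_le_walkupSum {n : ℕ} (hn : n ≠ 0) :
    (2 * n - 1).choose n + (n - 1) ≤ walkupSum n := by
  rw [walkupSum_eq_add_sum_properDivisors hn, ← sum_properDivisors_totient_div n]
  gcongr with d
  exact Nat.le_mul_of_pos_left _ (one_le_choose_two_mul_sub_one d)

theorem walkupSum_le {n : ℕ} (hn : n ≠ 0) :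
    walkupSum n ≤ (2 * n - 1).choose n + (2 * (n / 2) - 1).choose (n / 2) * (n - 1) := by
  rw [walkupSum_eq_add_sum_properDivisors hn, ← sum_properDivisors_totient_div n, mul_sum]
  gcongr with d hd
  exact choose_two_mul_sub_one_monotone (le_div_two_of_mem_properDivisors hd)

-- `walkupSum n` is in fact divisible by `n`, but it suffices that `/` rounds down by less than
-- `n`: the proper divisors contribute at least `n - 1`.
theorem choose_le_mul_walkupT {n : ℕ} (hn : n ≠ 0) : (2 * n - 1).choose n ≤ n * walkupT n := by
  have hsum := choose_add_le_walkupSum hn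
  have hdiv := Nat.div_add_mod (walkupSum n) n
  have hmod := Nat.mod_lt (walkupSum n) (pos_of_ne_zero hn)
  rw [walkupT_eq_walkupSum_div]
  omega

theorem mul_walkupT_le {n : ℕ} (hn : n ≠ 0) :
    n * walkupT n ≤ (2 * n - 1).choose n + (2 * (n / 2) - 1).choose (n / 2) * n :=
  calc n * walkupT n ≤ walkupSum n := Nat.mul_div_le _ n
    _ ≤ _ := walkupSum_le hn
    _ ≤ _ := by gcongr; omega

theorem walkupT_bounds {n : ℕ} (hn : n ≠ 0) :
    ((2 * n - 1).choose n : ℝ) / n ≤ walkupT n ∧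
      (walkupT n : ℝ) ≤
        ((2 * n - 1).choose n : ℝ) / n + ((2 * (n / 2) - 1).choose (n / 2) : ℝ) * n / n := by
  have hn' : (0 : ℝ) < n := by positivity
  rw [div_le_iff₀' hn', ← add_div, le_div_iff₀' hn']
  exact ⟨mod_cast choose_le_mul_walkupT hn, mod_cast mul_walkupT_le hn⟩

theorem centralBinom_mul_sqrt_div_four_pow_eq {n : ℕ} (hn : n ≠ 0) :
    centralBinom n * √(π * n) / 4 ^ n =
      √π * Stirling.stirlingSeq (2 * n) / Stirling.stirlingSeq n ^ 2 := by
  have hn' : (0 : ℝ) < n := by positivity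
  have h4n : √(2 * (2 * n : ℕ) : ℝ) = 2 * √n := by
    rw [show (2 * (2 * n : ℕ) : ℝ) = 2 ^ 2 * n by push_cast; ring, sqrt_mul (by positivity),
      sqrt_sq two_pos.le]
  have hpow : ((2 * n : ℕ) : ℝ) ^ (2 * n) = 4 ^ n * ((n : ℝ) ^ n) ^ 2 := by
    rw [pow_mul, ← pow_mul _ n 2, mul_comm n 2, pow_mul]; push_cast; ring
  rw [centralBinom_eq_two_mul_choose, cast_choose ℝ (by omega : n ≤ 2 * n),
    show 2 * n - n = n by omega, Stirling.stirlingSeq, Stirling.stirlingSeq, h4n,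
    sqrt_mul pi_pos.le, div_pow, hpow, mul_comm 2 n, pow_mul (rexp 1), div_pow (n ! : ℝ),
    mul_pow (√(2 * n : ℝ)), sq_sqrt (by positivity), div_pow (n : ℝ)]
  field_simp
  rw [sq_sqrt hn'.le]

theorem tendsto_centralBinom_mul_sqrt_div_four_pow :
    Tendsto (fun n : ℕ ↦ centralBinom n * √(π * n) / 4 ^ n) atTop (𝓝 1) := by
  have hπ : √π ≠ 0 := by positivity
  have h := (tendsto_const_nhds (x := √π)).mul
    (Stirling.tendsto_stirlingSeq_sqrt_pi.comp (tendsto_id.const_mul_atTop' two_pos))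
  have := h.div (Stirling.tendsto_stirlingSeq_sqrt_pi.pow 2) (pow_ne_zero 2 hπ)
  rw [← sq, div_self (pow_ne_zero 2 hπ)] at this
  refine this.congr' ?_
  filter_upwards [eventually_ne_atTop 0] with n hn
  exact (centralBinom_mul_sqrt_div_four_pow_eq hn).symm

theorem tendsto_choose_half_mul_div_four_pow :
    Tendsto (fun n : ℕ ↦ ((2 * (n / 2) - 1).choose (n / 2) : ℝ) * (2 * √(π * n) * n / 4 ^ n))
      atTop (𝓝 0) := by
  have hgeom := (tendsto_pow_const_div_const_pow_of_one_lt 2 one_lt_two).const_mul (4 : ℝ)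
  rw [mul_zero] at hgeom
  refine squeeze_zero (fun n ↦ by positivity) (fun n ↦ ?_) hgeom
  have hchoose : ((2 * (n / 2) - 1).choose (n / 2) : ℝ) ≤ 2 ^ n := by
    calc ((2 * (n / 2) - 1).choose (n / 2) : ℝ) ≤ 4 ^ (n / 2) := by
          exact_mod_cast (choose_le_choose _ (sub_le _ 1)).trans (centralBinom_le_four_pow _)
      _ = 2 ^ (2 * (n / 2)) := by rw [pow_mul]; norm_num
      _ ≤ 2 ^ n := pow_le_pow_right₀ one_le_two (Nat.mul_div_le n 2)
  have hsqrt : √(π * n) ≤ 2 * n := by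
    have : (n : ℝ) ≤ n ^ 2 := mod_cast Nat.le_self_pow two_ne_zero n
    rw [sqrt_le_iff]
    constructor <;> nlinarith [pi_le_four]
  calc ((2 * (n / 2) - 1).choose (n / 2) : ℝ) * (2 * √(π * n) * n / 4 ^ n)
      ≤ 2 ^ n * (2 * (2 * n) * n / 4 ^ n) := by gcongr
    _ = 4 * (n ^ 2 / 2 ^ n) := by
      rw [show (4 : ℝ) ^ n = 2 ^ n * 2 ^ n by rw [← mul_pow]; norm_num]
      field_simp
      ring

theorem choose_div_mul_eq_centralBinom_mul_sqrt_div_four_pow {n : ℕ} (hn : n ≠ 0) :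
    ((2 * n - 1).choose n : ℝ) / n * (2 * √(π * n) * n / 4 ^ n) =
      centralBinom n * √(π * n) / 4 ^ n := by
  rw [← two_mul_choose_two_mul_sub_one hn]
  push_cast
  field_simp

theorem treeT_bounds_and_asymptotics :
    (∀ n : ℕ, 2 ≤ n →
      (Nat.choose (2 * n - 1) n : ℝ) / n ≤ (walkupT n : ℝ) ∧
      (walkupT n : ℝ) ≤ (Nat.choose (2 * n - 1) n : ℝ) / n +
        (Nat.choose (2 * (n / 2) - 1) (n / 2) : ℝ) * n / n) ∧
    Tendsto (fun n : ℕ =>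
        (walkupT n : ℝ) / ((4 : ℝ) ^ n / (2 * Real.sqrt (Real.pi * n) * n)))
      atTop (nhds 1) := by
  refine ⟨fun n hn ↦ walkupT_bounds (by omega), ?_⟩
  have hupper :=
    tendsto_centralBinom_mul_sqrt_div_four_pow.add tendsto_choose_half_mul_div_four_pow
  rw [add_zero] at hupper
  refine tendsto_of_tendsto_of_tendsto_of_le_of_le' tendsto_centralBinom_mul_sqrt_div_four_pow
    hupper ?_ ?_ <;> filter_upwards [eventually_ne_atTop 0] with n hn <;>
    rw [← choose_div_mul_eq_centralBinom_mul_sqrt_div_four_pow hn, div_div_eq_mul_div,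
      mul_div_assoc (walkupT n : ℝ)]
  · exact mul_le_mul_of_nonneg_right (walkupT_bounds hn).1 (by positivity)
  · calc _ ≤ _ := mul_le_mul_of_nonneg_right (walkupT_bounds hn).2 (by positivity)
      _ = _ := by rw [add_mul, mul_div_cancel_right₀ _ (cast_ne_zero.mpr hn)]
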